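/- Let X be a uniformly convex real Banach space and let C be a nonempty convex subset of X that is compact in the weak topology of X. Let S = {T₁, T₂, …, T_m} be a finite family of pairwise commuting mappings T_i : C → C, each satisfying condition B_{γ,μ} on C for γ ∈ [0,1] and μ ∈ [0,1/2] with 2μ ≤ γ. Then the fixed point sets F(T_i) = {x ∈ C : T_i x = x} have nonempty intersection: ⋂_{i=1}^{m} F(T_i) ≠ ∅. -/

import Mathlib

/-!
For a single map, condition `B_{γ,μ}` implies condition (E), `‖x - T y‖ ≤ c ‖x - T x‖ + ‖x - y‖`,
and the map has an approximate fixed point sequence: its Picard orbit when `γ > 0` (for `γ = 2μ`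
uniform convexity is what forces the step lengths to zero), and fixed points of the contractions
`s • x₀ + (1 - s) • T` when `γ = μ = 0`, where `T` is nonexpansive. The asymptotic radius of that
sequence is convex and continuous, hence attains its minimum on the weakly compact set; uniform
convexity makes the minimizer unique, and condition (E) makes `T z` a minimizer along with `z`.

Condition (E) also makes each fixed point set closed and convex. By commutativity `T (k + 1)` maps
the common fixed points of `T 1, …, T k` to themselves, so induction on `k` finishes the proof.
-/

open Filter Topology Set Bornology

section FixedPoints

variable {X : Type*} [NormedAddCommGroup X]

theorem exists_forall_norm_add_le_two_sub_mul [NormedSpace ℝ X] [UniformConvexSpace X] {ε : ℝ}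
    (hε : 0 < ε) :
    ∃ δ > 0, ∀ ⦃ρ : ℝ⦄, 0 < ρ → ∀ ⦃u v : X⦄, ‖u‖ ≤ ρ → ‖v‖ ≤ ρ → ε * ρ ≤ ‖u - v‖ →
      ‖u + v‖ ≤ (2 - δ) * ρ := by
  obtain ⟨δ, hδ, h⟩ := exists_forall_closed_ball_dist_add_le_two_sub X hε
  refine ⟨δ, hδ, fun ρ hρ u v hu hv huv => ?_⟩
  have hρ' : ‖ρ⁻¹‖ = ρ⁻¹ := Real.norm_of_nonneg (inv_nonneg.2 hρ.le)
  have key := h (x := ρ⁻¹ • u) (y := ρ⁻¹ • v)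
    (by rwa [norm_smul, hρ', inv_mul_le_one₀ hρ])
    (by rwa [norm_smul, hρ', inv_mul_le_one₀ hρ])
    (by rwa [← smul_sub, norm_smul, hρ', le_inv_mul_iff₀ hρ, mul_comm])
  rwa [← smul_add, norm_smul, hρ', inv_mul_le_iff₀ hρ, mul_comm] at key

theorem tendsto_norm_sub_of_tendsto_norm_add [NormedSpace ℝ X] [UniformConvexSpace X]
    {ι : Type*} {l : Filter ι} {u v : ι → X} {r : ℝ} (hu : Tendsto (fun i => ‖u i‖) l (𝓝 r))
    (hv : Tendsto (fun i => ‖v i‖) l (𝓝 r))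
    (huv : Tendsto (fun i => ‖u i + v i‖) l (𝓝 (2 * r))) :
    Tendsto (fun i => ‖u i - v i‖) l (𝓝 0) := by
  rcases l.eq_or_neBot with rfl | _
  · exact tendsto_bot
  have hr : 0 ≤ r := ge_of_tendsto' hu fun i => norm_nonneg _
  rcases hr.eq_or_lt with rfl | hr
  · refine squeeze_zero (fun i => norm_nonneg _) (fun i => norm_sub_le _ _) ?_
    simpa using hu.add hv
  refine tendsto_order.2 ⟨fun a ha => Eventually.of_forall fun i => ha.trans_le (norm_nonneg _),
    fun ε hε => ?_⟩
  obtain ⟨δ, hδ, huc⟩ :=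
    exists_forall_norm_add_le_two_sub_mul (X := X) (div_pos hε (by linarith : 0 < r + 1))
  -- small enough that `(2 - δ) * (r + η) < 2 * r - η`
  set η := min 1 (r * δ / 4)
  have hη : 0 < η := lt_min one_pos (by positivity)
  have hη1 : η ≤ 1 := min_le_left _ _
  have hηδ : η ≤ r * δ / 4 := min_le_right _ _
  filter_upwards [hu.eventually (gt_mem_nhds (by linarith : r < r + η)),
    hv.eventually (gt_mem_nhds (by linarith : r < r + η)),
    huv.eventually (lt_mem_nhds (by linarith : 2 * r - η < 2 * r))] with i hui hvi huvi
  by_contra! hε'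
  have hρ : ε / (r + 1) * (r + η) ≤ ‖u i - v i‖ := by
    refine le_trans ?_ hε'
    rw [div_mul_eq_mul_div, div_le_iff₀ (by linarith)]
    nlinarith
  have := huc (by linarith) hui.le hvi.le hρ
  nlinarith [mul_pos hη hδ]

/-- `x n - x (n + k)` is asymptotically `k • (x n - x (n + 1))`, of norm `k * L`. -/
theorem eq_zero_of_isBounded_of_tendsto_norm_sub_succ [NormedSpace ℝ X] {x : ℕ → X}
    (hx : IsBounded (range x)) {L : ℝ} (hL : Tendsto (fun n => ‖x n - x (n + 1)‖) atTop (𝓝 L))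
    (hstep : Tendsto (fun n => (x n - x (n + 1)) - (x (n + 1) - x (n + 2))) atTop (𝓝 0)) :
    L = 0 := by
  set u : ℕ → X := fun n => x n - x (n + 1)
  have hu_shift : ∀ k, Tendsto (fun n => u (n + k) - u n) atTop (𝓝 0) := by
    intro k
    induction k with
    | zero => simp
    | succ k ih =>
      have h := ih.sub (hstep.comp (tendsto_add_atTop_nat k))
      rw [sub_zero] at h
      refine h.congr fun n => ?_
      simp only [Function.comp_apply, u, add_assoc]
      abel
  have hdev : ∀ k : ℕ, Tendsto (fun n => (x n - x (n + k)) - (k : ℝ) • u n) atTop (𝓝 0) := by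
    intro k
    induction k with
    | zero => simp
    | succ k ih =>
      have h := ih.add (hu_shift k)
      rw [add_zero] at h
      refine h.congr fun n => ?_
      simp only [u, Nat.cast_succ, add_smul, one_smul, add_assoc]
      abel
  obtain ⟨M, hM⟩ := Metric.isBounded_iff.1 hx
  have hkL : ∀ k : ℕ, k * L ≤ M := fun k => by
    refine le_of_tendsto_of_tendsto' (hL.const_mul (k : ℝ))
      (by simpa using (hdev k).norm.const_add M) fun n => ?_
    calc k * ‖u n‖ = ‖(k : ℝ) • u n‖ := by rw [norm_smul, Real.norm_natCast]
      _ ≤ ‖x n - x (n + k)‖ + ‖(x n - x (n + k)) - (k : ℝ) • u n‖ :=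
        norm_le_norm_add_norm_sub _ _
      _ ≤ M + ‖(x n - x (n + k)) - (k : ℝ) • u n‖ := by
        gcongr
        exact dist_eq_norm (x n) _ ▸ hM (mem_range_self n) (mem_range_self (n + k))
  have hL0 : 0 ≤ L := ge_of_tendsto' hL fun n => norm_nonneg _
  by_contra hne
  obtain ⟨k, hk⟩ := exists_nat_gt (M / L)
  rw [div_lt_iff₀ (hL0.lt_of_ne' hne)] at hk
  linarith [hkL k]

theorem eq_zero_of_isBounded_of_tendsto_norm_sub_two [NormedSpace ℝ X] [UniformConvexSpace X]
    {x : ℕ → X} (hx : IsBounded (range x)) {L : ℝ}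
    (h₁ : Tendsto (fun n => ‖x n - x (n + 1)‖) atTop (𝓝 L))
    (h₂ : Tendsto (fun n => ‖x n - x (n + 2)‖) atTop (𝓝 (2 * L))) : L = 0 :=
  eq_zero_of_isBounded_of_tendsto_norm_sub_succ hx h₁ <| tendsto_zero_iff_norm_tendsto_zero.2 <|
    tendsto_norm_sub_of_tendsto_norm_add h₁ (h₁.comp (tendsto_add_atTop_nat 1)) <|
      h₂.congr fun n => by simp only [sub_add_sub_cancel]

theorem isClosed_of_isCompact_toWeakSpace_image [NormedSpace ℝ X] {K : Set X}
    (hK : IsCompact (toWeakSpace ℝ X '' K)) : IsClosed K := by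
  convert hK.isClosed.preimage (toWeakSpaceCLM ℝ X).continuous
  exact (preimage_image_eq K (toWeakSpace ℝ X).injective).symm

theorem isBounded_of_isCompact_toWeakSpace_image [NormedSpace ℝ X] {K : Set X}
    (hK : IsCompact (toWeakSpace ℝ X '' K)) : IsBounded K := by
  have h : IsBounded (NormedSpace.inclusionInDoubleDualLi ℝ (E := X) '' K) := by
    have := WeakDual.isBounded_iff_isVonNBounded.mpr
      ((hK.image (NormedSpace.inclusionInDoubleDualWeak ℝ X).continuous).isVonNBounded ℝ)
    rwa [image_image] at this
  exact (NormedSpace.inclusionInDoubleDualLi ℝ).isometry.antilipschitz.isBounded_preimage h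
    |>.subset (subset_preimage_image _ _)

theorem isCompact_toWeakSpace_image_of_subset [NormedSpace ℝ X] {K L : Set X}
    (hK : IsCompact (toWeakSpace ℝ X '' K)) (hLK : L ⊆ K) (hLconv : Convex ℝ L)
    (hLcl : IsClosed L) : IsCompact (toWeakSpace ℝ X '' L) := by
  refine hK.of_isClosed_subset ?_ (image_mono hLK)
  rw [← hLcl.closure_eq, hLconv.toWeakSpace_closure ℝ]
  exact isClosed_closure

theorem ConvexOn.lowerSemicontinuous_comp_toWeakSpace_symm [NormedSpace ℝ X] {f : X → ℝ}
    (hf : ConvexOn ℝ univ f) (hfc : LowerSemicontinuous f) :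
    LowerSemicontinuous (f ∘ (toWeakSpace ℝ X).symm) := by
  refine lowerSemicontinuous_iff_isClosed_preimage.2 fun t => ?_
  rw [preimage_comp, ← LinearEquiv.image_eq_preimage_symm,
    ← (hfc.isClosed_preimage t).closure_eq, Convex.toWeakSpace_closure ℝ]
  · exact isClosed_closure
  · exact (by simpa using hf.convex_le t : Convex ℝ {x | f x ≤ t})

theorem ConvexOn.exists_isMinOn_of_isCompact_toWeakSpace_image [NormedSpace ℝ X] {f : X → ℝ}
    (hf : ConvexOn ℝ univ f) (hfc : LowerSemicontinuous f) {K : Set X}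
    (hK : IsCompact (toWeakSpace ℝ X '' K)) (hKne : K.Nonempty) : ∃ z ∈ K, IsMinOn f K z := by
  obtain ⟨-, ⟨z, hz, rfl⟩, hmin⟩ :=
    ((hf.lowerSemicontinuous_comp_toWeakSpace_symm hfc).lowerSemicontinuousOn _).exists_isMinOn
      (hKne.image _) hK
  refine ⟨z, hz, fun u hu => ?_⟩
  simpa using hmin (mem_image_of_mem _ hu)

/-- Only meaningful for bounded `x`; otherwise `limUnder` may return a junk value. -/
noncomputable def asymptoticRadius {ι : Type*} (𝒰 : Ultrafilter ι) (x : ι → X) (u : X) : ℝ :=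
  limUnder (𝒰 : Filter ι) fun i => ‖x i - u‖

section AsymptoticRadius

variable {ι : Type*} {𝒰 : Ultrafilter ι} {x : ι → X}

theorem tendsto_norm_sub_asymptoticRadius (hx : IsBounded (range x)) (u : X) :
    Tendsto (fun i => ‖x i - u‖) 𝒰 (𝓝 (asymptoticRadius 𝒰 x u)) := by
  obtain ⟨M, hM⟩ := hx.exists_norm_le
  obtain ⟨ℓ, -, hℓ⟩ := (isCompact_Icc (a := 0) (b := M + ‖u‖)).ultrafilter_le_nhds
    (𝒰.map fun i => ‖x i - u‖) <| by
      rw [Ultrafilter.coe_map, le_principal_iff]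
      exact mem_map.2 <| Eventually.of_forall fun i =>
        ⟨norm_nonneg _, (norm_sub_le _ _).trans (by gcongr; exact hM _ (mem_range_self i))⟩
  exact tendsto_nhds_limUnder ⟨ℓ, hℓ⟩

theorem lipschitzWith_one_asymptoticRadius (hx : IsBounded (range x)) :
    LipschitzWith 1 (asymptoticRadius 𝒰 x) :=
  LipschitzWith.of_le_add fun u v =>
    le_of_tendsto_of_tendsto' (tendsto_norm_sub_asymptoticRadius hx u)
      ((tendsto_norm_sub_asymptoticRadius hx v).add_const _) fun i => by
        rw [dist_comm, dist_eq_norm]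
        exact norm_sub_le_norm_sub_add_norm_sub _ _ _

theorem convexOn_asymptoticRadius [NormedSpace ℝ X] (hx : IsBounded (range x)) :
    ConvexOn ℝ univ (asymptoticRadius 𝒰 x) := by
  refine ⟨convex_univ, fun u _ v _ a b ha hb hab => ?_⟩
  refine le_of_tendsto_of_tendsto' (tendsto_norm_sub_asymptoticRadius hx _)
    (((tendsto_norm_sub_asymptoticRadius hx u).const_mul a).add
      ((tendsto_norm_sub_asymptoticRadius hx v).const_mul b)) fun i => ?_
  have h := (convexOn_norm convex_univ).2 (mem_univ (x i - u)) (mem_univ (x i - v)) ha hb hab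
  obtain rfl : a = 1 - b := by linarith
  rwa [show x i - ((1 - b) • u + b • v) = (1 - b) • (x i - u) + b • (x i - v) by module]

theorem eq_of_isMinOn_asymptoticRadius [NormedSpace ℝ X] [UniformConvexSpace X]
    (hx : IsBounded (range x)) {K : Set X} (hK : Convex ℝ K) {z w : X} (hz : z ∈ K) (hw : w ∈ K)
    (hzmin : IsMinOn (asymptoticRadius 𝒰 x) K z) (hwmin : IsMinOn (asymptoticRadius 𝒰 x) K w) :
    z = w := by
  set φ := asymptoticRadius 𝒰 x
  set m : X := (1 / 2 : ℝ) • z + (1 / 2 : ℝ) • w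
  have hm : m ∈ K := hK hz hw (by norm_num) (by norm_num) (by norm_num)
  have hφw : φ w = φ z := le_antisymm (hwmin hz) (hzmin hw)
  have hφm : φ m = φ z := by
    refine le_antisymm ?_ (hzmin hm)
    have := (convexOn_asymptoticRadius (𝒰 := 𝒰) hx).2 (mem_univ z) (mem_univ w)
      (by norm_num : (0 : ℝ) ≤ 1 / 2) (by norm_num : (0 : ℝ) ≤ 1 / 2) (by norm_num)
    simp only [smul_eq_mul] at this
    linarith
  have hsum : Tendsto (fun i => ‖(x i - z) + (x i - w)‖) 𝒰 (𝓝 (2 * φ z)) := by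
    rw [← hφm]
    refine ((tendsto_norm_sub_asymptoticRadius hx m).const_mul 2).congr fun i => ?_
    rw [show x i - z + (x i - w) = (2 : ℝ) • (x i - m) by module, norm_smul, Real.norm_two]
  have hw' : Tendsto (fun i => ‖x i - w‖) 𝒰 (𝓝 (φ z)) :=
    hφw ▸ tendsto_norm_sub_asymptoticRadius hx w
  have hzw :=
    tendsto_norm_sub_of_tendsto_norm_add (tendsto_norm_sub_asymptoticRadius hx z) hw' hsum
  simp only [sub_sub_sub_cancel_left, tendsto_const_nhds_iff, norm_eq_zero, sub_eq_zero] at hzw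
  exact hzw.symm

end AsymptoticRadius

theorem LipschitzOnWith.exists_seq_tendsto_norm_sub_apply [NormedSpace ℝ X] [CompleteSpace X]
    {K : Set X} (hKconv : Convex ℝ K) (hKcl : IsClosed K) (hKb : IsBounded K) (hKne : K.Nonempty)
    {T : X → X} (hT : MapsTo T K K) (hTl : LipschitzOnWith 1 T K) :
    ∃ x : ℕ → X, (∀ n, x n ∈ K) ∧ Tendsto (fun n => ‖x n - T (x n)‖) atTop (𝓝 0) := by
  obtain ⟨x₀, hx₀⟩ := hKne
  have happrox : ∀ n : ℕ, ∃ p ∈ K, ‖p - T p‖ ≤ 1 / (n + 1) * Metric.diam K := by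
    intro n
    set s : ℝ := 1 / (n + 1)
    have hs0 : 0 < s := by positivity
    have hs1 : s ≤ 1 := by rw [div_le_one (by positivity)]; linarith
    set f : X → X := fun p => s • x₀ + (1 - s) • T p
    have hf : MapsTo f K K := fun p hp => hKconv hx₀ (hT hp) hs0.le (by linarith) (by ring)
    have hfl : LipschitzOnWith (Real.toNNReal (1 - s)) f K :=
      LipschitzOnWith.of_dist_le' fun p hp q hq => by
        rw [dist_eq_norm, dist_eq_norm, show f p - f q = (1 - s) • (T p - T q) by module,
          norm_smul, Real.norm_of_nonneg (by linarith)]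
        gcongr
        simpa [dist_eq_norm] using hTl.dist_le_mul p hp q hq
    obtain ⟨p, hp, hfp, -⟩ := ContractingWith.exists_fixedPoint' hKcl.isComplete hf
      ⟨by simpa using hs0, hfl.mapsToRestrict hf⟩ hx₀ (edist_ne_top _ _)
    refine ⟨p, hp, ?_⟩
    have hfp : p - T p = s • (x₀ - T p) := calc
      p - T p = f p - T p := by rw [hfp.eq]
      _ = s • (x₀ - T p) := by module
    rw [hfp, norm_smul, Real.norm_of_nonneg hs0.le, ← dist_eq_norm]
    gcongr
    exact Metric.dist_le_diam_of_mem hKb hx₀ (hT hp)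
  choose x hxK hxT using happrox
  refine ⟨x, hxK, squeeze_zero (fun n => norm_nonneg _) hxT ?_⟩
  simpa using tendsto_one_div_add_atTop_nhds_zero_nat.mul_const (Metric.diam K)

/-- Condition (E) of García-Falset, Llorens-Fuster and Suzuki. -/
def ConditionE (c : ℝ) (K : Set X) (T : X → X) : Prop :=
  ∀ x ∈ K, ∀ y ∈ K, ‖x - T y‖ ≤ c * ‖x - T x‖ + ‖x - y‖

def ConditionB (γ μ : ℝ) (K : Set X) (T : X → X) : Prop :=
  ∀ x ∈ K, ∀ y ∈ K, γ * ‖x - T x‖ ≤ ‖x - y‖ + μ * ‖y - T y‖ →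
    ‖T x - T y‖ ≤ (1 - γ) * ‖x - y‖ + μ * (‖x - T y‖ + ‖y - T x‖)

namespace ConditionE

variable {c : ℝ} {K : Set X} {T : X → X}

theorem norm_sub_apply_le (hE : ConditionE c K T) {z y : X} (hz : z ∈ K) (hTz : T z = z)
    (hy : y ∈ K) : ‖z - T y‖ ≤ ‖z - y‖ := by
  simpa [hTz] using hE z hz y hy

theorem isClosed_fixedPoints (hE : ConditionE c K T) (hK : IsClosed K) :
    IsClosed {x ∈ K | T x = x} := by
  refine IsSeqClosed.isClosed fun u p hu hup => ?_
  have hp : p ∈ K := hK.mem_of_tendsto hup (Eventually.of_forall fun n => (hu n).1)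
  have hupT : Tendsto u atTop (𝓝 (T p)) := tendsto_iff_norm_sub_tendsto_zero.2 <|
    squeeze_zero (fun n => norm_nonneg _) (fun n => hE.norm_sub_apply_le (hu n).1 (hu n).2 hp)
      (tendsto_iff_norm_sub_tendsto_zero.1 hup)
  exact ⟨hp, tendsto_nhds_unique hupT hup⟩

theorem convex_fixedPoints [NormedSpace ℝ X] [StrictConvexSpace ℝ X] (hE : ConditionE c K T)
    (hK : Convex ℝ K) : Convex ℝ {x ∈ K | T x = x} := by
  rintro z₁ ⟨hz₁, hTz₁⟩ z₂ ⟨hz₂, hTz₂⟩ a b ha hb hab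
  obtain rfl : a = 1 - b := by linarith
  rw [← AffineMap.lineMap_apply_module]
  have hw : AffineMap.lineMap z₁ z₂ b ∈ K := hK.lineMap_mem hz₁ hz₂ ⟨hb, by linarith⟩
  set w := AffineMap.lineMap z₁ z₂ b
  have h₁ : dist z₁ (T w) ≤ b * dist z₁ z₂ := calc
    dist z₁ (T w) ≤ dist z₁ w := by simpa [dist_eq_norm] using hE.norm_sub_apply_le hz₁ hTz₁ hw
    _ = b * dist z₁ z₂ := by rw [dist_left_lineMap, Real.norm_of_nonneg hb]
  have h₂ : dist (T w) z₂ ≤ (1 - b) * dist z₁ z₂ := calc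
    dist (T w) z₂ ≤ dist w z₂ := by
      simpa [dist_eq_norm, norm_sub_rev] using hE.norm_sub_apply_le hz₂ hTz₂ hw
    _ = (1 - b) * dist z₁ z₂ := by rw [dist_lineMap_right, Real.norm_of_nonneg ha]
  refine ⟨hw, eq_lineMap_of_dist_eq_mul_of_dist_eq_mul ?_ ?_⟩
  all_goals linarith [dist_triangle z₁ (T w) z₂]

theorem exists_fixedPoint_of_tendsto [NormedSpace ℝ X] [UniformConvexSpace X]
    (hE : ConditionE c K T) (hT : MapsTo T K K) (hKconv : Convex ℝ K)
    (hKw : IsCompact (toWeakSpace ℝ X '' K)) {x : ℕ → X} (hxK : ∀ n, x n ∈ K)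
    (hxT : Tendsto (fun n => ‖x n - T (x n)‖) atTop (𝓝 0)) : ∃ z ∈ K, T z = z := by
  have hx : IsBounded (range x) :=
    (isBounded_of_isCompact_toWeakSpace_image hKw).subset (range_subset_iff.2 hxK)
  set 𝒰 := Ultrafilter.of (atTop : Filter ℕ)
  obtain ⟨z, hz, hzmin⟩ :=
    (convexOn_asymptoticRadius (𝒰 := 𝒰) hx).exists_isMinOn_of_isCompact_toWeakSpace_image
      (lipschitzWith_one_asymptoticRadius hx).continuous.lowerSemicontinuous hKw ⟨x 0, hxK 0⟩
  have hTz : asymptoticRadius 𝒰 x (T z) ≤ asymptoticRadius 𝒰 x z := by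
    have := ((hxT.mono_left (Ultrafilter.of_le _)).const_mul c).add
      (tendsto_norm_sub_asymptoticRadius hx z)
    rw [mul_zero, zero_add] at this
    exact le_of_tendsto_of_tendsto' (tendsto_norm_sub_asymptoticRadius hx (T z)) this
      fun n => hE _ (hxK n) _ hz
  exact ⟨z, hz, eq_of_isMinOn_asymptoticRadius hx hKconv (hT hz) hz
    (fun u hu => hTz.trans (hzmin hu)) hzmin⟩

end ConditionE

namespace ConditionB

variable {γ μ : ℝ} {K : Set X} {T : X → X}

theorem mono (hB : ConditionB γ μ K T) {L : Set X} (hLK : L ⊆ K) : ConditionB γ μ L T :=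
  fun x hx y hy => hB x (hLK hx) y (hLK hy)

theorem lipschitzOnWith_one (hB : ConditionB 0 0 K T) : LipschitzOnWith 1 T K :=
  LipschitzOnWith.mk_one fun x hx y hy => by simpa [dist_eq_norm] using hB x hx y hy (by simp)

theorem norm_apply_sub_apply_apply_le (hB : ConditionB γ μ K T) (hγ1 : γ ≤ 1) (hμ0 : 0 ≤ μ)
    {x : X} (hx : x ∈ K) (hTx : T x ∈ K) :
    ‖T x - T (T x)‖ ≤ (1 - γ) * ‖x - T x‖ + μ * ‖x - T (T x)‖ := by
  simpa using hB x hx (T x) hTx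
    (by nlinarith [norm_nonneg (x - T x), norm_nonneg (T x - T (T x))])

theorem norm_sub_apply_le_of_le (hB : ConditionB γ μ K T) (hγ1 : γ ≤ 1) (hμ0 : 0 ≤ μ)
    (hμγ : 2 * μ ≤ γ) {x y : X} (hx : x ∈ K) (hy : y ∈ K)
    (h : γ * ‖x - T x‖ ≤ ‖x - y‖ + μ * ‖y - T y‖) : ‖x - T y‖ ≤ 3 * ‖x - T x‖ + ‖x - y‖ := by
  have hT := hB x hx y hy h
  have h₁ := norm_sub_le_norm_sub_add_norm_sub x (T x) (T y)
  have h₂ : ‖y - T x‖ ≤ ‖x - y‖ + ‖x - T x‖ := by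
    simpa [norm_sub_rev y x] using norm_sub_le_norm_sub_add_norm_sub y x (T x)
  nlinarith [norm_nonneg (x - y), norm_nonneg (x - T x), norm_nonneg (x - T y)]

theorem conditionE_of_pos (hB : ConditionB γ μ K T) (hγ1 : γ ≤ 1) (hμ : 0 < μ)
    (hμγ : 2 * μ ≤ γ) : ConditionE (3 + γ / μ) K T := by
  intro x hx y hy
  have hγμ : 0 ≤ γ / μ * ‖x - T x‖ :=
    mul_nonneg (div_nonneg (by linarith) hμ.le) (norm_nonneg _)
  rw [add_mul]
  by_cases h : γ * ‖x - T x‖ ≤ ‖x - y‖ + μ * ‖y - T y‖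
  · linarith [hB.norm_sub_apply_le_of_le hγ1 hμ.le hμγ hx hy h]
  · have hTy : ‖y - T y‖ ≤ γ / μ * ‖x - T x‖ := by
      rw [div_mul_eq_mul_div, le_div_iff₀ hμ]
      nlinarith [norm_nonneg (x - y)]
    linarith [norm_sub_le_norm_sub_add_norm_sub x y (T y), norm_nonneg (x - T x)]

/-- Suzuki's argument: where the premise of condition `B` fails at `(x, y)`, it holds at
`(T x, y)`. -/
theorem conditionE_of_eq_zero (hB : ConditionB γ 0 K T) (hγ0 : 0 ≤ γ) (hγ1 : γ ≤ 1)
    (hT : MapsTo T K K) : ConditionE 3 K T := by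
  intro x hx y hy
  by_cases h : γ * ‖x - T x‖ ≤ ‖x - y‖ + 0 * ‖y - T y‖
  · exact hB.norm_sub_apply_le_of_le hγ1 le_rfl (by linarith) hx hy h
  rw [zero_mul, add_zero, not_le] at h
  have h₁ : ‖T x - T (T x)‖ ≤ (1 - γ) * ‖x - T x‖ := by
    simpa using hB.norm_apply_sub_apply_apply_le hγ1 le_rfl hx (hT hx)
  have h₂ : ‖x - T x‖ ≤ ‖x - y‖ + ‖T x - y‖ := by
    have := norm_sub_le_norm_sub_add_norm_sub x y (T x)
    rwa [norm_sub_rev y (T x)] at this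
  have h₃ : ‖T (T x) - T y‖ ≤ ‖T x - y‖ := by
    have := hB (T x) (hT hx) y hy (by
      nlinarith [mul_le_mul_of_nonneg_left h₁ hγ0,
        mul_nonneg (mul_nonneg (sub_nonneg.2 hγ1) (norm_nonneg (x - T x))) (sub_nonneg.2 hγ1)])
    nlinarith [mul_nonneg hγ0 (norm_nonneg (T x - y))]
  calc ‖x - T y‖ ≤ ‖x - T (T x)‖ + ‖T (T x) - T y‖ := norm_sub_le_norm_sub_add_norm_sub _ _ _
    _ ≤ ‖x - T x‖ + ‖T x - T (T x)‖ + ‖T (T x) - T y‖ := by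
      gcongr; exact norm_sub_le_norm_sub_add_norm_sub _ _ _
    _ ≤ 3 * ‖x - T x‖ + ‖x - y‖ := by
      have := norm_sub_le_norm_sub_add_norm_sub (T x) x y
      rw [norm_sub_rev (T x) x] at this
      nlinarith [mul_nonneg hγ0 (norm_nonneg (x - T x))]

theorem exists_conditionE (hB : ConditionB γ μ K T) (hT : MapsTo T K K) (hγ1 : γ ≤ 1)
    (hμ0 : 0 ≤ μ) (hμγ : 2 * μ ≤ γ) : ∃ c, ConditionE c K T := by
  rcases hμ0.eq_or_lt with rfl | hμ
  · exact ⟨3, hB.conditionE_of_eq_zero (by linarith) hγ1 hT⟩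
  · exact ⟨_, hB.conditionE_of_pos hγ1 hμ hμγ⟩

theorem tendsto_norm_iterate_sub_apply [NormedSpace ℝ X] [UniformConvexSpace X]
    (hB : ConditionB γ μ K T) (hT : MapsTo T K K) (hKb : IsBounded K) (hγ0 : 0 < γ)
    (hγ1 : γ ≤ 1) (hμ0 : 0 ≤ μ) (hμγ : 2 * μ ≤ γ) {x₀ : X} (hx₀ : x₀ ∈ K) :
    Tendsto (fun n => ‖T^[n] x₀ - T (T^[n] x₀)‖) atTop (𝓝 0) := by
  set x : ℕ → X := fun n => T^[n] x₀
  have hxK : ∀ n, x n ∈ K := fun n => hT.iterate n hx₀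
  have hsucc : ∀ n, T (x n) = x (n + 1) := fun n => (Function.iterate_succ_apply' T n x₀).symm
  change Tendsto (fun n => ‖x n - T (x n)‖) atTop (𝓝 0)
  simp only [hsucc]
  set D : ℕ → ℝ := fun n => ‖x n - x (n + 1)‖
  have hstep : ∀ n, D (n + 1) ≤ (1 - γ) * D n + μ * ‖x n - x (n + 2)‖ := fun n => by
    simpa [hsucc] using hB.norm_apply_sub_apply_apply_le hγ1 hμ0 (hxK n) (hT (hxK n))
  have htwo : ∀ n, ‖x n - x (n + 2)‖ ≤ D n + D (n + 1) := fun n =>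
    norm_sub_le_norm_sub_add_norm_sub _ _ _
  have hanti : Antitone D := antitone_nat_of_succ_le fun n => by
    nlinarith [hstep n, mul_le_mul_of_nonneg_left (htwo n) hμ0,
      mul_nonneg (by linarith : 0 ≤ γ - 2 * μ) (norm_nonneg (x n - x (n + 1)))]
  obtain ⟨L, hL⟩ : ∃ L, Tendsto D atTop (𝓝 L) :=
    ⟨_, tendsto_atTop_ciInf hanti ⟨0, by rintro - ⟨n, rfl⟩; exact norm_nonneg _⟩⟩
  have hL₁ : Tendsto (fun n => D (n + 1)) atTop (𝓝 L) := hL.comp (tendsto_add_atTop_nat 1)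
  have hL0 : 0 ≤ L := ge_of_tendsto' hL fun n => norm_nonneg _
  suffices L = 0 from this ▸ hL
  rcases hμγ.lt_or_eq with hlt | heq
  · have := le_of_tendsto_of_tendsto' (hL₁.const_mul (1 - μ)) (hL.const_mul (1 - γ + μ))
      fun n => by nlinarith [hstep n, mul_le_mul_of_nonneg_left (htwo n) hμ0]
    nlinarith
  · have hμ : 0 < μ := by linarith
    have hlow : Tendsto (fun n => (D (n + 1) - (1 - γ) * D n) / μ) atTop (𝓝 (2 * L)) := by
      have := (hL₁.sub (hL.const_mul (1 - γ))).div_const μ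
      rwa [show (L - (1 - γ) * L) / μ = 2 * L by rw [← heq]; field_simp; ring] at this
    refine eq_zero_of_isBounded_of_tendsto_norm_sub_two (hKb.subset (range_subset_iff.2 hxK)) hL
      (tendsto_of_tendsto_of_tendsto_of_le_of_le hlow (by simpa [two_mul] using hL.add hL₁)
        (fun n => ?_) htwo)
    rw [div_le_iff₀' hμ]
    linarith [hstep n]

theorem exists_fixedPoint [NormedSpace ℝ X] [CompleteSpace X] [UniformConvexSpace X]
    (hB : ConditionB γ μ K T) (hT : MapsTo T K K) (hKne : K.Nonempty) (hKconv : Convex ℝ K)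
    (hKw : IsCompact (toWeakSpace ℝ X '' K)) (hγ1 : γ ≤ 1) (hμ0 : 0 ≤ μ) (hμγ : 2 * μ ≤ γ) :
    ∃ z ∈ K, T z = z := by
  obtain ⟨c, hE⟩ := hB.exists_conditionE hT hγ1 hμ0 hμγ
  obtain ⟨x₀, hx₀⟩ := hKne
  have hKb := isBounded_of_isCompact_toWeakSpace_image hKw
  obtain ⟨x, hxK, hxT⟩ : ∃ x : ℕ → X, (∀ n, x n ∈ K) ∧
      Tendsto (fun n => ‖x n - T (x n)‖) atTop (𝓝 0) := by
    rcases (by linarith : 0 ≤ γ).eq_or_lt with rfl | hγ0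
    · obtain rfl : μ = 0 := by linarith
      exact hB.lipschitzOnWith_one.exists_seq_tendsto_norm_sub_apply hKconv
        (isClosed_of_isCompact_toWeakSpace_image hKw) hKb ⟨x₀, hx₀⟩ hT
    · exact ⟨fun n => T^[n] x₀, fun n => hT.iterate n hx₀,
        hB.tendsto_norm_iterate_sub_apply hT hKb hγ0 hγ1 hμ0 hμγ hx₀⟩
  exact hE.exists_fixedPoint_of_tendsto hT hKconv hKw hxK hxT

end ConditionB

def commonFixedPoints {α ι : Type*} (C : Set α) (T : ι → α → α) (s : Finset ι) : Set α :=
  {x ∈ C | ∀ i ∈ s, T i x = x}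

theorem commonFixedPoints_insert {α ι : Type*} [DecidableEq ι] (C : Set α) (T : ι → α → α)
    (s : Finset ι) (j : ι) :
    commonFixedPoints C T (insert j s) = {x ∈ commonFixedPoints C T s | T j x = x} := by
  ext x
  simp only [commonFixedPoints, Finset.forall_mem_insert, mem_ofPred_eq]
  tauto

theorem commonFixedPoints_nonempty_and_convex_and_isClosed [NormedSpace ℝ X] [CompleteSpace X]
    [UniformConvexSpace X] {C : Set X} (hCne : C.Nonempty) (hCconv : Convex ℝ C)
    (hCw : IsCompact (toWeakSpace ℝ X '' C)) {γ μ : ℝ} (hγ1 : γ ≤ 1) (hμ0 : 0 ≤ μ)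
    (hμγ : 2 * μ ≤ γ) {ι : Type*} {T : ι → X → X} (s : Finset ι)
    (hmaps : ∀ i ∈ s, MapsTo (T i) C C)
    (hcomm : ∀ i ∈ s, ∀ j ∈ s, ∀ x ∈ C, T i (T j x) = T j (T i x))
    (hB : ∀ i ∈ s, ConditionB γ μ C (T i)) :
    (commonFixedPoints C T s).Nonempty ∧ Convex ℝ (commonFixedPoints C T s) ∧
      IsClosed (commonFixedPoints C T s) := by
  classical
  induction s using Finset.induction_on with
  | empty =>
    simpa [commonFixedPoints] using ⟨hCne, hCconv, isClosed_of_isCompact_toWeakSpace_image hCw⟩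
  | insert j s _ ih =>
    obtain ⟨hne, hconv, hcl⟩ := ih (fun i hi => hmaps i (Finset.mem_insert_of_mem hi))
      (fun i hi k hk => hcomm i (Finset.mem_insert_of_mem hi) k (Finset.mem_insert_of_mem hk))
      (fun i hi => hB i (Finset.mem_insert_of_mem hi))
    have hsub : commonFixedPoints C T s ⊆ C := fun x hx => hx.1
    have hmapsj : MapsTo (T j) (commonFixedPoints C T s) (commonFixedPoints C T s) :=
      fun x ⟨hx, hfix⟩ => ⟨hmaps j (Finset.mem_insert_self j s) hx, fun i hi => by
        rw [hcomm i (Finset.mem_insert_of_mem hi) j (Finset.mem_insert_self j s) x hx, hfix i hi]⟩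
    have hBj := (hB j (Finset.mem_insert_self j s)).mono hsub
    obtain ⟨c, hE⟩ := hBj.exists_conditionE hmapsj hγ1 hμ0 hμγ
    rw [commonFixedPoints_insert]
    exact ⟨hBj.exists_fixedPoint hmapsj hne hconv
        (isCompact_toWeakSpace_image_of_subset hCw hsub hconv hcl) hγ1 hμ0 hμγ,
      hE.convex_fixedPoints hconv, hE.isClosed_fixedPoints hcl⟩

end FixedPoints

theorem condB_fixed_point_sets_inter_nonempty_general
    {X : Type*} [NormedAddCommGroup X] [NormedSpace ℝ X] [CompleteSpace X]
    [UniformConvexSpace X]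
    (C : Set X) (hC : C.Nonempty) (hconv : Convex ℝ C)
    (hwcomp : IsCompact (toWeakSpace ℝ X '' C))
    (m : ℕ)
    (γ μ : ℝ) (hγ : γ ∈ Set.Icc (0 : ℝ) 1) (hμ : μ ∈ Set.Icc (0 : ℝ) (1 / 2))
    (hμγ : 2 * μ ≤ γ)
    (T : ℕ → X → X)
    (hmaps : ∀ i, 1 ≤ i → i ≤ m → Set.MapsTo (T i) C C)
    (hcomm : ∀ i j, 1 ≤ i → i ≤ m → 1 ≤ j → j ≤ m →
      ∀ x ∈ C, T i (T j x) = T j (T i x))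
    (hB : ∀ i, 1 ≤ i → i ≤ m → ∀ x ∈ C, ∀ y ∈ C,
      γ * ‖x - T i x‖ ≤ ‖x - y‖ + μ * ‖y - T i y‖ →
        ‖T i x - T i y‖ ≤ (1 - γ) * ‖x - y‖
          + μ * (‖x - T i y‖ + ‖y - T i x‖)) :
    (⋂ i ∈ Finset.Icc 1 m, {x ∈ C | T i x = x}).Nonempty := by
  obtain ⟨⟨z, hzC, hz⟩, -⟩ := commonFixedPoints_nonempty_and_convex_and_isClosed hC hconv hwcomp
    hγ.2 hμ.1 hμγ (Finset.Icc 1 m)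
    (fun i hi => hmaps i (Finset.mem_Icc.1 hi).1 (Finset.mem_Icc.1 hi).2)
    (fun i hi j hj => hcomm i j (Finset.mem_Icc.1 hi).1 (Finset.mem_Icc.1 hi).2
      (Finset.mem_Icc.1 hj).1 (Finset.mem_Icc.1 hj).2)
    (fun i hi => hB i (Finset.mem_Icc.1 hi).1 (Finset.mem_Icc.1 hi).2)
  exact ⟨z, mem_iInter₂.2 fun i hi => ⟨hzC, hz i hi⟩⟩

/-- For a finite family `T 1, …, T m` of pairwise commuting self-maps of a
nonempty convex weakly compact subset of a uniformly convex Banach space,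
each satisfying condition `B_{γ,μ}`, the fixed point sets
`F(T i) = {x ∈ C | T i x = x}` have nonempty intersection. -/
theorem condB_fixed_point_sets_inter_nonempty
    {X : Type*} [NormedAddCommGroup X] [NormedSpace ℝ X] [CompleteSpace X]
    [UniformConvexSpace X]
    (C : Set X) (hC : C.Nonempty) (hconv : Convex ℝ C)
    (hwcomp : IsCompact (toWeakSpace ℝ X '' C))
    (m : ℕ) (hm : 1 ≤ m)
    (γ μ : ℝ) (hγ : γ ∈ Set.Icc (0 : ℝ) 1) (hμ : μ ∈ Set.Icc (0 : ℝ) (1 / 2))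
    (hμγ : 2 * μ ≤ γ)
    (T : ℕ → X → X)
    (hmaps : ∀ i, 1 ≤ i → i ≤ m → Set.MapsTo (T i) C C)
    (hcomm : ∀ i j, 1 ≤ i → i ≤ m → 1 ≤ j → j ≤ m →
      ∀ x ∈ C, T i (T j x) = T j (T i x))
    (hB : ∀ i, 1 ≤ i → i ≤ m → ∀ x ∈ C, ∀ y ∈ C,
      γ * ‖x - T i x‖ ≤ ‖x - y‖ + μ * ‖y - T i y‖ →
        ‖T i x - T i y‖ ≤ (1 - γ) * ‖x - y‖
          + μ * (‖x - T i y‖ + ‖y - T i x‖)) :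
    (⋂ i ∈ Finset.Icc 1 m, {x ∈ C | T i x = x}).Nonempty :=
  condB_fixed_point_sets_inter_nonempty_general C hC hconv hwcomp m γ μ hγ hμ hμγ T hmaps hcomm hB
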